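/- arXiv:2511.21286 — 3 statements merged into one kernel-verified Lean document; each statement's English description precedes it below -/
import Mathlib

section
/- Every root of Lehmer's polynomial P₁₀ reduced modulo 2 in the field 𝔽₃₂ (equivalently, in an algebraic closure of 𝔽₂) is a primitive 31st root of unity, and the ten roots are pairwise distinct. -/
/-!
Modulo 2, Lehmer's polynomial is the product of two of the six irreducible quintic factors of the
31st cyclotomic polynomial, so it divides `X ^ 31 - 1`. Hence every root `α` satisfies
`α ^ 31 = 1`, and `α ≠ 1` because `P₁₀(1) = -1`; as 31 is prime, `α` has order 31.
Since 31 is odd, `X ^ 31 - 1` is separable in characteristic 2, hence so is its divisor `P₁₀`,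
whose ten roots are therefore distinct.
-/

open Polynomial

/-- Lehmer's polynomial. -/
noncomputable def P10 : Polynomial ℤ :=
  X ^ 10 + X ^ 9 - X ^ 7 - X ^ 6 - X ^ 5 - X ^ 4 - X ^ 3 + X + 1

/-- Lehmer's polynomial reduced modulo 2, in an algebraic closure of 𝔽₂. -/
noncomputable def P10bar : Polynomial (AlgebraicClosure (ZMod 2)) :=
  P10.map (Int.castRingHom (AlgebraicClosure (ZMod 2)))

namespace Polynomial

theorem map_dvd_map_of_eq_mul_add_two_mul {R : Type*} [CommRing R] [CharP R 2]
    {f g q r : ℤ[X]} (h : g = f * q + 2 * r) :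
    f.map (Int.castRingHom R) ∣ g.map (Int.castRingHom R) := by
  have two_eq_zero : (2 : R[X]) = 0 := by
    rw [← C_ofNat, CharTwo.two_eq_zero, C_0]
  exact ⟨q.map (Int.castRingHom R), by simp [h, two_eq_zero]⟩

theorem orderOf_eq_of_isRoot_of_dvd_X_pow_sub_one {R : Type*} [CommRing R] {f : R[X]} {p : ℕ}
    [Fact p.Prime] (hf : f ∣ X ^ p - 1) (h1 : ¬f.IsRoot 1) {α : R} (hα : f.IsRoot α) :
    orderOf α = p := by
  have hpow : α ^ p = 1 := by
    simpa [sub_eq_zero] using eval_eq_zero_of_dvd_of_eval_eq_zero hf hα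
  exact orderOf_eq_prime hpow (by rintro rfl; exact h1 hα)

theorem nodup_roots_of_dvd_X_pow_sub_one {K : Type*} [Field K] {f : K[X]} {n : ℕ}
    (hn : (n : K) ≠ 0) (hf : f ∣ X ^ n - 1) : f.roots.Nodup :=
  nodup_roots ((X_pow_sub_one_separable_iff.mpr hn).of_dvd hf)

end Polynomial

-- Over `ℤ`, `X ^ 31 - 1 = P₁₀ * q + 2 * r`, where `q` is the quotient of `X ^ 31 - 1` by `P₁₀`
-- in `𝔽₂[X]`.
theorem P10_dvd_X_pow_31_sub_one_mod_two :
    ∃ q r : ℤ[X], X ^ 31 - 1 = P10 * q + 2 * r :=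
  ⟨1 + X + X ^ 2 + X ^ 5 + X ^ 7 + X ^ 9 + X ^ 10 + X ^ 11 + X ^ 12 + X ^ 14 + X ^ 16 + X ^ 19 +
      X ^ 20 + X ^ 21,
    -1 - X - X ^ 2 + X ^ 4 + X ^ 5 + X ^ 6 + X ^ 7 + X ^ 8 - X ^ 10 - X ^ 11 + X ^ 13 + X ^ 14 +
      X ^ 15 + X ^ 16 + X ^ 17 + X ^ 18 - X ^ 20 - X ^ 21 + X ^ 23 + X ^ 24 + X ^ 25 + X ^ 26 +
      X ^ 27 - X ^ 29 - X ^ 30,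
    by unfold P10; ring⟩

theorem P10_monic : P10.Monic := by
  unfold P10
  monicity!

theorem P10_natDegree : P10.natDegree = 10 := by
  unfold P10
  compute_degree!

theorem P10_eval_one : P10.eval 1 = -1 := by
  simp [P10]

theorem P10_map_not_isRoot_one {R : Type*} [CommRing R] [Nontrivial R] :
    ¬(P10.map (Int.castRingHom R)).IsRoot 1 := by
  simp [IsRoot, eval_map, eval₂_at_one, P10_eval_one]

theorem P10_map_dvd_X_pow_31_sub_one {R : Type*} [CommRing R] [CharP R 2] :
    P10.map (Int.castRingHom R) ∣ X ^ 31 - 1 := by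
  obtain ⟨q, r, h⟩ := P10_dvd_X_pow_31_sub_one_mod_two
  simpa using map_dvd_map_of_eq_mul_add_two_mul (R := R) h

theorem lehmer_mod_two_roots_primitive_31 :
    (∀ α : AlgebraicClosure (ZMod 2), P10bar.IsRoot α → orderOf α = 31) ∧
    P10bar.roots.Nodup ∧ Multiset.card P10bar.roots = 10 := by
  have : Fact (Nat.Prime 31) := ⟨by norm_num⟩
  have h31 : ((31 : ℕ) : AlgebraicClosure (ZMod 2)) ≠ 0 := by
    rw [Ne, CharP.cast_eq_zero_iff _ 2]
    decide
  have hdvd : P10bar ∣ X ^ 31 - 1 := P10_map_dvd_X_pow_31_sub_one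
  refine ⟨fun α ↦ orderOf_eq_of_isRoot_of_dvd_X_pow_sub_one hdvd P10_map_not_isRoot_one,
    nodup_roots_of_dvd_X_pow_sub_one h31 hdvd, ?_⟩
  rw [P10bar, IsAlgClosed.card_roots_map_eq_natDegree_of_isUnit_leadingCoeff _
    (P10_monic.leadingCoeff ▸ isUnit_one), P10_natDegree]
end

section
/- Lehmer's polynomial P₁₀(x) = x¹⁰ + x⁹ − x⁷ − x⁶ − x⁵ − x⁴ − x³ + x + 1 has exactly two real roots, one in the interval (1, 2) and one in (0, 1), and they are multiplicative inverses of each other. -/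
open Polynomial

private lemma aeval_P10 (x : ℝ) :
    Polynomial.aeval x P10 =
      x ^ 10 + x ^ 9 - x ^ 7 - x ^ 6 - x ^ 5 - x ^ 4 - x ^ 3 + x + 1 := by
  simp [P10]

/-- auxiliary quintic -/
private noncomputable def L (z : ℝ) : ℝ := z ^ 5 + z ^ 4 - 5 * z ^ 3 - 5 * z ^ 2 + 4 * z + 3

private lemma P10_eq_L (x : ℝ) (hx : x ≠ 0) :
    Polynomial.aeval x P10 = x ^ 5 * L (x + 1 / x) := by
  rw [aeval_P10, L]
  field_simp
  ring

private lemma L_strictMono : ∀ u v : ℝ, 2 ≤ u → 2 ≤ v → u < v → L u < L v := by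
  intro u v hu hv huv
  have hQ : 0 < u^4+u^3*v+u^2*v^2+u*v^3+v^4+u^3+u^2*v+u*v^2+v^3-5*u^2-5*u*v-5*v^2-5*u-5*v+4 := by
    nlinarith [mul_nonneg (by linarith : (0:ℝ) ≤ u-2) (by linarith : (0:ℝ) ≤ v-2),
      mul_nonneg (mul_nonneg (by linarith : (0:ℝ) ≤ u-2) (by linarith : (0:ℝ) ≤ v-2)) (by linarith : (0:ℝ) ≤ u+v),
      sq_nonneg (u-2), sq_nonneg (v-2), sq_nonneg (u*v-4), sq_nonneg (u+v-4),
      mul_nonneg (sq_nonneg (u-2)) (by linarith : (0:ℝ) ≤ v),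
      mul_nonneg (sq_nonneg (v-2)) (by linarith : (0:ℝ) ≤ u)]
  have key : L v - L u = (v - u) * (u^4+u^3*v+u^2*v^2+u*v^3+v^4+u^3+u^2*v+u*v^2+v^3-5*u^2-5*u*v-5*v^2-5*u-5*v+4) := by
    unfold L; ring
  nlinarith [mul_pos (by linarith : (0:ℝ) < v - u) hQ]

private lemma L_neg (z : ℝ) (hz : z ≤ -2) : L z < 0 := by
  unfold L
  nlinarith [sq_nonneg (z + 2), sq_nonneg (z ^ 2 + z), sq_nonneg (z ^ 2 - 4),
    sq_nonneg (z ^ 2 + 2 * z), sq_nonneg z]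

private lemma two_le_add_inv (x : ℝ) (hx : 0 < x) : 2 ≤ x + 1 / x := by
  have h : x + 1/x - 2 = (x-1)^2 / x := by field_simp; ring
  nlinarith [div_nonneg (sq_nonneg (x-1)) hx.le]

theorem lehmer_two_real_roots :
    ∃ a b : ℝ, 1 < a ∧ a < 2 ∧ 0 < b ∧ b < 1 ∧
      Polynomial.aeval a P10 = 0 ∧ Polynomial.aeval b P10 = 0 ∧ a * b = 1 ∧
      ∀ x : ℝ, Polynomial.aeval x P10 = 0 → x = a ∨ x = b := by
  -- existence via IVT on [1,2]
  have hcont : ContinuousOn (fun x : ℝ => Polynomial.aeval x P10) (Set.Icc 1 2) := by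
    simp only [aeval_P10]
    fun_prop
  have h1 : (Polynomial.aeval (1:ℝ) P10) = -1 := by rw [aeval_P10]; norm_num
  have h2 : (Polynomial.aeval (2:ℝ) P10) = 1291 := by rw [aeval_P10]; norm_num
  have hiv := intermediate_value_Ioo (by norm_num : (1:ℝ) ≤ 2) hcont
  have h0mem : (0:ℝ) ∈ Set.Ioo (Polynomial.aeval (1:ℝ) P10) (Polynomial.aeval (2:ℝ) P10) := by
    rw [h1, h2]; norm_num
  obtain ⟨a, ha, hfa'⟩ := hiv h0mem
  have hfa : Polynomial.aeval a P10 = 0 := hfa'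
  obtain ⟨ha1, ha2⟩ := ha
  have ha0 : (0:ℝ) < a := by linarith
  refine ⟨a, 1 / a, ha1, ha2, by positivity, by
    rw [div_lt_one ha0]; linarith, hfa, ?_, by field_simp, ?_⟩
  · rw [P10_eq_L _ (by positivity)]
    have := P10_eq_L a ha0.ne'
    rw [hfa] at this
    have hL : L (a + 1 / a) = 0 := by
      have h5 : a ^ 5 ≠ 0 := by positivity
      exact (mul_eq_zero.mp this.symm).resolve_left h5
    have : 1 / a + 1 / (1 / a) = a + 1 / a := by field_simp; ring
    rw [this, hL, mul_zero]
  · intro x hx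
    have hx0 : x ≠ 0 := by
      intro h
      rw [h, aeval_P10] at hx
      norm_num at hx
    have hxpos : 0 < x := by
      by_contra h
      push_neg at h
      have hxneg : x < 0 := lt_of_le_of_ne h hx0
      have hz : x + 1 / x ≤ -2 := by
        have := two_le_add_inv (-x) (by linarith)
        have : 2 ≤ -x + 1 / (-x) := this
        rw [one_div_neg_eq_neg_one_div] at this
        linarith
      have hLneg := L_neg _ hz
      rw [P10_eq_L _ hx0] at hx
      have h5 : x ^ 5 < 0 := by
        have : x ^ 5 = x * (x ^ 2) ^ 2 := by ring
        rw [this]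
        exact mul_neg_of_neg_of_pos hxneg (by positivity)
      nlinarith
    -- both x and a give roots of L at values ≥ 2
    have hLx : L (x + 1 / x) = 0 := by
      rw [P10_eq_L _ hx0] at hx
      exact (mul_eq_zero.mp hx).resolve_left (by positivity)
    have hLa : L (a + 1 / a) = 0 := by
      have := P10_eq_L a ha0.ne'
      rw [hfa] at this
      exact (mul_eq_zero.mp this.symm).resolve_left (by positivity)
    have hzx := two_le_add_inv x hxpos
    have hza := two_le_add_inv a ha0
    have hzeq : x + 1 / x = a + 1 / a := by
      rcases lt_trichotomy (x + 1 / x) (a + 1 / a) with h | h | h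
      · exfalso; have := L_strictMono _ _ hzx hza h; rw [hLx, hLa] at this; exact lt_irrefl _ this
      · exact h
      · exfalso; have := L_strictMono _ _ hza hzx h; rw [hLx, hLa] at this; exact lt_irrefl _ this
    have hquad : (x - a) * (x - 1 / a) = 0 := by
      have hax : a * x ≠ 0 := by positivity
      field_simp at hzeq ⊢
      nlinarith [hzeq]
    rcases mul_eq_zero.mp hquad with h | h
    · left; linarith
    · right; linarith
end

section
/- The cubic g(x,y,z) = x²y + ζ²x²z + ζ¹⁹xy² + ζ¹³xz² + ζ⁷y²z + ζ³⁰yz² over 𝔽₃₂ (with ζ⁵ + ζ² + 1 = 0) has a unique singular point, located at (ζ¹⁵:ζ²⁸:1), i.e., this is the unique projective point where all three partial derivatives of g vanish. -/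
open MvPolynomial

/-- The cubic `g = x²y + ζ²x²z + ζ¹⁹xy² + ζ¹³xz² + ζ⁷y²z + ζ³⁰yz²` as a polynomial
in the three variables `X 0 = x`, `X 1 = y`, `X 2 = z`. -/
noncomputable def cubicGpoly {K : Type*} [Field K] (ζ : K) : MvPolynomial (Fin 3) K :=
  X 0 ^ 2 * X 1 + C (ζ ^ 2) * X 0 ^ 2 * X 2 + C (ζ ^ 19) * X 0 * X 1 ^ 2 +
    C (ζ ^ 13) * X 0 * X 2 ^ 2 + C (ζ ^ 7) * X 1 ^ 2 * X 2 + C (ζ ^ 30) * X 1 * X 2 ^ 2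

/-- Working in ℙ² over an algebraically closed field of characteristic 2 containing
ζ with ζ⁵ + ζ² + 1 = 0: the unique singular point of the cubic `{g = 0}`, i.e. the
unique projective point at which `g` and all three of its formal partial derivatives
vanish, is (ζ¹⁵ : ζ²⁸ : 1). -/
theorem cubic_unique_singular_point (K : Type*) [Field K] [IsAlgClosed K] [CharP K 2]
    (ζ : K) (hζ : ζ ^ 5 + ζ ^ 2 + 1 = 0) :
    ∀ p : Fin 3 → K, p ≠ 0 →
      ((eval p (cubicGpoly ζ) = 0 ∧ ∀ i : Fin 3, eval p (pderiv i (cubicGpoly ζ)) = 0) ↔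
        ∃ lam : K, lam ≠ 0 ∧ p = lam • ![ζ ^ 15, ζ ^ 28, 1]) := by
  have h2 : (2 : K) = 0 := by simpa using CharP.cast_eq_zero K 2
  have hζ0 : ζ ≠ 0 := by
    intro h; rw [h] at hζ; simp at hζ
  have h31 : ζ ^ 31 = 1 := by
    linear_combination (ζ^26 + ζ^23 + ζ^21 + ζ^20 + ζ^17 + ζ^16 + ζ^15 + ζ^14 + ζ^13 +
        ζ^9 + ζ^8 + ζ^6 + ζ^5 + ζ^4 + ζ^2 + 1) * hζ +
      (-(ζ^28) - ζ^26 - ζ^25 - ζ^23 - ζ^22 - ζ^21 - ζ^20 - ζ^19 - ζ^18 - ζ^17 - ζ^16 -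
        ζ^15 - ζ^14 - ζ^13 - ζ^11 - ζ^10 - ζ^9 - ζ^8 - ζ^7 - ζ^6 - ζ^5 - ζ^4 - ζ^2 - 1) * h2
  intro p hp
  constructor
  · rintro ⟨-, hd⟩
    have hx := hd 0
    have hy := hd 1
    simp only [cubicGpoly, map_add, pderiv_mul, pderiv_pow, pderiv_X, pderiv_C,
      Pi.single_apply, Fin.isValue, Fin.reduceEq, if_true, if_false, ite_true, ite_false, map_mul, map_pow, eval_add, eval_mul, eval_C, eval_X] at hx hy
    norm_num at hx hy
    -- from the y-partial: (p 0 - ζ^15 * p 2)^2 = 0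
    have ka : (p 0 - ζ ^ 15 * p 2) ^ 2 = 0 := by
      linear_combination hy +
        (-(ζ^15 * p 0 * p 2) - ζ^19 * p 0 * p 1 - ζ^7 * p 1 * p 2) * h2
    -- from the x-partial: ζ^19 * (p 1 - ζ^28 * p 2)^2 = 0
    have kb' : ζ ^ 19 * (p 1 - ζ ^ 28 * p 2) ^ 2 = 0 := by
      linear_combination hx + (p 2 ^ 2 * ζ^13 * (ζ^31 + 1)) * h31 +
        (-(p 0 * p 1) - ζ^2 * p 0 * p 2 - ζ^47 * p 1 * p 2) * h2
    have ha : p 0 = ζ ^ 15 * p 2 :=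
      sub_eq_zero.mp ((pow_eq_zero_iff (by norm_num : (2:ℕ) ≠ 0)).mp ka)
    have hb : p 1 = ζ ^ 28 * p 2 := by
      have := (mul_eq_zero.mp kb').resolve_left (pow_ne_zero _ hζ0)
      exact sub_eq_zero.mp ((pow_eq_zero_iff (by norm_num : (2:ℕ) ≠ 0)).mp this)
    by_cases hc : p 2 = 0
    · exact absurd (_root_.funext fun i => by fin_cases i <;> simp [ha, hb, hc]) hp
    · refine ⟨p 2, hc, _root_.funext fun i => ?_⟩
      fin_cases i <;>
        simp [ha, hb, Pi.smul_apply, smul_eq_mul, mul_comm]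
  · rintro ⟨lam, hlam, rfl⟩
    simp only [cubicGpoly, map_add, pderiv_mul, pderiv_pow, pderiv_X, pderiv_C,
      Pi.single_apply, Fin.isValue, Fin.reduceEq, if_true, if_false, ite_true, ite_false, map_mul, map_pow, eval_add, eval_mul, eval_C, eval_X,
      Pi.smul_apply, Matrix.cons_val_zero, Matrix.cons_val_one, Matrix.head_cons,
      Matrix.cons_val_two, Matrix.tail_cons, smul_eq_mul]
    refine ⟨?_, fun i => ?_⟩
    · linear_combination (lam^3 * (ζ^59 + ζ^32 + ζ^28 + 2*ζ^27 + 2*ζ)) * h31 +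
        (lam^3 * (ζ^28 + ζ^27 + ζ)) * h2
    · fin_cases i <;>
        simp only [cubicGpoly, map_add, pderiv_mul, pderiv_pow, pderiv_X, pderiv_C,
          Pi.single_apply, Fin.isValue, Fin.reduceEq, if_true, if_false, ite_true, ite_false, map_mul, map_pow, eval_add, eval_mul, eval_C, eval_X,
          Pi.smul_apply, Matrix.cons_val_zero, Matrix.cons_val_one, Matrix.head_cons,
          Matrix.cons_val_two, Matrix.tail_cons, smul_eq_mul] <;>
        norm_num [Fin.ext_iff]
      · linear_combination (lam^2 * (ζ^44 + ζ^13 + 2*ζ^12)) * h31 +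
          (lam^2 * (ζ^17 + ζ^13 + ζ^12)) * h2
      · linear_combination (lam^2 * (2*ζ^31 + 2*ζ^4 + 2)) * h31 +
          (lam^2 * (ζ^30 + ζ^4 + 1)) * h2
      · linear_combination (lam^2 * (ζ^32 + 2*ζ^27 + 2*ζ)) * h31 +
          (lam^2 * (ζ^28 + ζ^27 + ζ)) * h2
end
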